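/- Let t ≥ 3 be an odd integer. For every integer m with t − 1 ≤ m ≤ (t² − 1)/4, there exists a partition λ of m which is not equal to its conjugate partition and such that the number of rows of λ plus the number of columns of λ equals t. -/

import Mathlib

/-!
A diagram with `r` rows and `c` columns can have any number of cells between the hook size
`r + c - 1` and the rectangle size `r * c`: below a first row of length `c`, fill the remaining
rows greedily. For `t = 2s + 1` take `s` rows and `s + 1` columns; since transposition swaps the
numbers of rows and columns, such a diagram is never self-conjugate.
-/

theorem List.exists_sortedGE_of_le_of_le_mul {n c s : ℕ} (hn : n ≤ s) (hs : s ≤ n * c) :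
    ∃ l : List ℕ, l.length = n ∧ l.sum = s ∧ l.SortedGE ∧ ∀ x ∈ l, 0 < x ∧ x ≤ c := by
  induction n generalizing c s with
  | zero => exact ⟨[], rfl, by rw [sum_nil]; omega, by simp [sortedGE_iff_pairwise], by simp⟩
  | succ n ih =>
    have hc : 0 < c := Nat.pos_of_ne_zero (by rintro rfl; omega)
    -- the greedy first entry `min c (s - n)` leaves a feasible remainder
    obtain ⟨a, ha, hac, has, hrest⟩ : ∃ a, 0 < a ∧ a ≤ c ∧ n + a ≤ s ∧ s - a ≤ n * a := by
      rcases le_total c (s - n) with h | h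
      · exact ⟨c, hc, le_rfl, by omega, by rw [Nat.succ_mul] at hs; omega⟩
      · exact ⟨s - n, by omega, h, by omega, by
          rw [show s - (s - n) = n by omega]; exact Nat.le_mul_of_pos_right n (by omega)⟩
    obtain ⟨l, hlen, hsum, hsort, hbound⟩ := ih (by omega) hrest
    refine ⟨a :: l, by simp [hlen], by simp only [List.sum_cons, hsum]; omega, ?_, ?_⟩
    · rw [sortedGE_iff_pairwise, pairwise_cons]
      exact ⟨fun x hx => (hbound x hx).2, sortedGE_iff_pairwise.1 hsort⟩
    · simp only [mem_cons, forall_eq_or_imp]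
      exact ⟨⟨ha, hac⟩, fun x hx => ⟨(hbound x hx).1, (hbound x hx).2.trans hac⟩⟩

namespace YoungDiagram

theorem card_ofRowLens (w : List ℕ) (hw : w.SortedGE) : (ofRowLens w hw).card = w.sum := by
  change (YoungDiagram.cellsOfRowLens w).card = w.sum
  clear hw
  induction w with
  | nil => rfl
  | cons a w ih =>
    rw [YoungDiagram.cellsOfRowLens, Finset.card_union_of_disjoint, Finset.card_map, ih,
      Finset.card_product, List.sum_cons, Finset.card_singleton, Finset.card_range, one_mul]
    rw [Finset.disjoint_left]
    rintro ⟨i, j⟩ h1 h2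
    simp only [Finset.mem_product, Finset.mem_singleton] at h1
    obtain ⟨⟨i', j'⟩, -, h⟩ := Finset.mem_map.1 h2
    simp only [Function.Embedding.prodMap, Prod.map, Function.Embedding.coeFn_mk,
      Prod.mk.injEq] at h
    omega

theorem transpose_ne_self_of_rowLen_ne_colLen {μ : YoungDiagram} {i : ℕ}
    (h : μ.rowLen i ≠ μ.colLen i) : μ.transpose ≠ μ :=
  fun hμ => h (by rw [← rowLen_transpose, hμ])

theorem exists_card_eq_colLen_rowLen {r c m : ℕ} (hr : 0 < r) (hc : 0 < c)
    (hm : r + c - 1 ≤ m) (hm' : m ≤ r * c) :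
    ∃ μ : YoungDiagram, μ.card = m ∧ μ.colLen 0 = r ∧ μ.rowLen 0 = c := by
  obtain ⟨l, hlen, hsum, hsort, hbound⟩ :=
    List.exists_sortedGE_of_le_of_le_mul (n := r - 1) (c := c) (s := m - c) (by omega)
      (by rw [Nat.sub_one_mul]; omega)
  have hsort' : (c :: l).SortedGE := by
    rw [List.sortedGE_iff_pairwise, List.pairwise_cons]
    exact ⟨fun x hx => (hbound x hx).2, List.sortedGE_iff_pairwise.1 hsort⟩
  have hpos : ∀ x ∈ c :: l, 0 < x := by
    simpa only [List.mem_cons, forall_eq_or_imp] using ⟨hc, fun x hx => (hbound x hx).1⟩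
  refine ⟨ofRowLens (c :: l) hsort', ?_, ?_, ?_⟩
  · rw [card_ofRowLens, List.sum_cons, hsum]; omega
  · rw [← length_rowLens, rowLens_length_ofRowLens hpos, List.length_cons, hlen]; omega
  · exact rowLen_ofRowLens (w := c :: l) ⟨0, by simp⟩

end YoungDiagram

/-- For every odd `t ≥ 3` and every `m` with `t - 1 ≤ m ≤ (t² - 1)/4` there is a
non-self-conjugate partition of `m` (encoded as a Young diagram with `m` cells)
whose number of rows plus number of columns equals `t`. -/
theorem stmt19 (t : ℕ) (ht3 : 3 ≤ t) (htodd : Odd t) :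
    ∀ m : ℕ, t - 1 ≤ m → m ≤ (t ^ 2 - 1) / 4 →
      ∃ μ : YoungDiagram, μ.card = m ∧ μ.transpose ≠ μ ∧
        μ.colLen 0 + μ.rowLen 0 = t := by
  obtain ⟨s, rfl⟩ := htodd
  intro m hm hm'
  have hsq : ((2 * s + 1) ^ 2 - 1) / 4 = s * (s + 1) := by
    rw [show (2 * s + 1) ^ 2 - 1 = 4 * (s * (s + 1)) by ring_nf; omega]; omega
  obtain ⟨μ, hcard, hcol, hrow⟩ :=
    YoungDiagram.exists_card_eq_colLen_rowLen (r := s) (c := s + 1) (by omega) (by omega)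
      (by omega) (hsq ▸ hm')
  exact ⟨μ, hcard, YoungDiagram.transpose_ne_self_of_rowLen_ne_colLen (i := 0) (by omega),
    by omega⟩
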